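/- For each b ∈ {0,1,2}, as formal power series in q: ∑_{k≥0} χ(k+b) q^k / (q;q)_k = ((q;q)_∞ / (q³;q³)_∞) · ∑_{m≥0} (-1)^{m+1} χ(m-b) q^{m(m+1)/2} / (q;q)_m, where χ(m) is the Jacobi symbol (m/3). -/

import Mathlib

open Finset PowerSeries

/-- The finite q-Pochhammer symbol `(q^M; q^M)_n = ∏_{i=1}^n (1 - q^{M i})`
as a formal power series in `q`. -/
noncomputable def pochP (M n : ℕ) : PowerSeries ℚ :=
  ∏ i ∈ Finset.range n, (1 - (X : PowerSeries ℚ) ^ (M * (i + 1)))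

/-- The infinite product `(q^M; q^M)_∞ = ∏_{i≥1} (1 - q^{M i})` as a formal power
series: its degree-`d` coefficient is the (stable) degree-`d` coefficient of the
partial products. -/
noncomputable def pochInf (M : ℕ) : PowerSeries ℚ :=
  PowerSeries.mk fun d => coeff d (pochP M (d + 1))

/-- The Jacobi symbol `(m/3)`. -/
def chi (m : ℤ) : ℤ := if m % 3 = 1 then 1 else if m % 3 = 2 then -1 else 0

namespace S15

noncomputable def pc (M n : ℕ) : PowerSeries ℂ :=
  ∏ i ∈ Finset.range n, (1 - (X : PowerSeries ℂ) ^ (M * (i + 1)))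

lemma constCoeff_pc (M n : ℕ) (hM : 1 ≤ M) : constantCoeff (pc M n) = 1 := by
  unfold pc
  rw [map_prod]
  apply Finset.prod_eq_one
  intro i _
  have h : (constantCoeff) ((X : PowerSeries ℂ) ^ (M * (i + 1))) = 0 := by
    rw [map_pow, constantCoeff_X, zero_pow]
    positivity
  simp [h]

lemma pc_ne_zero (M n : ℕ) (hM : 1 ≤ M) : pc M n ≠ 0 := by
  intro h
  have := constCoeff_pc M n hM
  rw [h, map_zero] at this
  simp at this

lemma pc_mul_inv (n : ℕ) : pc 1 n * (pc 1 n)⁻¹ = 1 :=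
  PowerSeries.mul_inv_cancel _ (by rw [constCoeff_pc 1 n le_rfl]; exact one_ne_zero)

lemma pc_zero : pc 1 0 = 1 := by simp [pc]

lemma inv_pc_zero : (pc 1 0)⁻¹ = 1 := by
  have := pc_mul_inv 0
  rwa [pc_zero, one_mul] at this

lemma pc_succ (n : ℕ) : pc 1 (n + 1) = pc 1 n * (1 - X ^ (n + 1)) := by
  unfold pc
  rw [Finset.prod_range_succ, one_mul]

lemma inv_succ (k : ℕ) :
    (pc 1 (k + 1))⁻¹ * (1 - (X : PowerSeries ℂ) ^ (k + 1)) = (pc 1 k)⁻¹ := by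
  apply mul_left_cancel₀ (pc_ne_zero 1 (k+1) le_rfl)
  calc pc 1 (k+1) * ((pc 1 (k + 1))⁻¹ * (1 - X ^ (k + 1)))
      = (pc 1 (k+1) * (pc 1 (k+1))⁻¹) * (1 - X ^ (k + 1)) := by ring
    _ = 1 - X ^ (k+1) := by rw [pc_mul_inv, one_mul]
    _ = pc 1 (k+1) * (pc 1 k)⁻¹ := by
        rw [pc_succ]
        calc (1 : PowerSeries ℂ) - X ^ (k+1)
            = (pc 1 k * (pc 1 k)⁻¹) * (1 - X^(k+1)) := by rw [pc_mul_inv, one_mul]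
          _ = pc 1 k * (1 - X ^ (k + 1)) * (pc 1 k)⁻¹ := by ring

lemma coeff_eq_of_dvd {R : Type*} [CommRing R] {n : ℕ} {f g : PowerSeries R}
    (h : (X : PowerSeries R) ^ n ∣ f - g)
    {e : ℕ} (he : e < n) : coeff e f = coeff e g := by
  have := (PowerSeries.X_pow_dvd_iff.mp h) e he
  rw [map_sub, sub_eq_zero] at this
  exact this

lemma prod_sub_one_dvd {R : Type*} [CommRing R] {ι : Type*} {s : Finset ι} {L : ℕ}
    {f : ι → PowerSeries R}
    (h : ∀ j ∈ s, (X : PowerSeries R) ^ L ∣ f j - 1) :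
    (X : PowerSeries R) ^ L ∣ (∏ j ∈ s, f j) - 1 := by
  classical
  induction s using Finset.induction_on with
  | empty => simp
  | @insert a s' hx ih =>
    rw [Finset.prod_insert hx]
    have h1 : (X : PowerSeries R) ^ L ∣ f a - 1 := h a (Finset.mem_insert_self a s')
    have h2 := ih (fun j hj => h j (Finset.mem_insert_of_mem hj))
    have : f a * ∏ j ∈ s', f j - 1 = f a * ((∏ j ∈ s', f j) - 1) + (f a - 1) := by ring
    rw [this]
    exact dvd_add (Dvd.dvd.mul_left h2 _) h1

lemma pochP_stable {M : ℕ} (hM : 1 ≤ M) {e n : ℕ} (he : e < n) :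
    coeff e (pochP M n) = coeff e (pochP M (e + 1)) := by
  obtain ⟨t, rfl⟩ : ∃ t, n = (e + 1) + t := ⟨n - (e+1), by omega⟩
  unfold pochP
  rw [Finset.prod_range_add]
  have hdvd : (X : PowerSeries ℚ) ^ (e+1) ∣
      (∏ x ∈ range t, (1 - (X:PowerSeries ℚ) ^ (M * (e + 1 + x + 1)))) - 1 := by
    apply prod_sub_one_dvd
    intro j _
    have : (1 : PowerSeries ℚ) - X ^ (M * (e + 1 + j + 1)) - 1 = -(X ^ (M * (e + 1 + j + 1))) := by
      ring
    rw [this]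
    apply Dvd.dvd.neg_right
    apply pow_dvd_pow
    nlinarith
  have := coeff_eq_of_dvd (n := e + 1)
    (f := (∏ i ∈ range (e+1), (1 - (X:PowerSeries ℚ) ^ (M * (i + 1)))) *
      ∏ x ∈ range t, (1 - (X:PowerSeries ℚ) ^ (M * (e + 1 + x + 1))))
    (g := (∏ i ∈ range (e+1), (1 - (X:PowerSeries ℚ) ^ (M * (i + 1)))) * 1)
    (by
      rw [← mul_sub]
      exact Dvd.dvd.mul_left hdvd _) (e := e) (by omega)
  rw [this, mul_one]

lemma coeff_mul_congr {R : Type*} [CommRing R] {d : ℕ} {f f' g : PowerSeries R}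
    (h : ∀ i ≤ d, coeff i f = coeff i f') :
    coeff d (f * g) = coeff d (f' * g) := by
  rw [PowerSeries.coeff_mul, PowerSeries.coeff_mul]
  apply Finset.sum_congr rfl
  intro p hp
  rw [Finset.HasAntidiagonal.mem_antidiagonal] at hp
  rw [h p.1 (by omega)]

lemma tri_succ (s : ℕ) : (s + 1) * (s + 1 + 1) / 2 = s * (s + 1) / 2 + (s + 1) := by
  have h : (s + 1) * (s + 1 + 1) = s * (s + 1) + (s + 1) * 2 := by ring
  rw [h, Nat.add_mul_div_right _ _ (by norm_num : 0 < 2)]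

lemma le_tri (m : ℕ) : m ≤ m * (m + 1) / 2 := by
  induction m with
  | zero => simp
  | succ s ih => rw [tri_succ]; omega

/-- `∑ k z^k q^{(j+1)k}/(q;q)_k`. -/
noncomputable def Gs (z : ℂ) (j : ℕ) : PowerSeries ℂ :=
  PowerSeries.mk fun d => ∑ k ∈ Finset.range (d + 1),
    z ^ k * coeff d ((X : PowerSeries ℂ) ^ ((j + 1) * k) * (pc 1 k)⁻¹)

lemma coeff_Gs {z : ℂ} {j d n : ℕ} (hn : d < n) :
    coeff d (Gs z j) = ∑ k ∈ Finset.range n,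
      z ^ k * coeff d ((X : PowerSeries ℂ) ^ ((j + 1) * k) * (pc 1 k)⁻¹) := by
  rw [Gs, coeff_mk]
  apply Finset.sum_subset
  · intro x hx; rw [Finset.mem_range] at *; omega
  · intro x _ hx
    rw [Finset.mem_range] at hx
    rw [PowerSeries.coeff_X_pow_mul', if_neg (by nlinarith), mul_zero]

lemma Gs_rec (z : ℂ) (j : ℕ) :
    Gs z (j + 1) = (1 - PowerSeries.C z * X ^ (j + 1)) * Gs z j := by
  ext d
  have hR : coeff d ((1 - PowerSeries.C z * X ^ (j + 1)) * Gs z j)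
      = coeff d (Gs z j)
        - z * (if j + 1 ≤ d then coeff (d - (j+1)) (Gs z j) else 0) := by
    rw [sub_mul, one_mul, map_sub, mul_assoc, PowerSeries.coeff_C_mul,
      PowerSeries.coeff_X_pow_mul']
  rw [hR]
  -- difference form
  have key : coeff d (Gs z j) - coeff d (Gs z (j+1))
      = z * (if j + 1 ≤ d then coeff (d - (j+1)) (Gs z j) else 0) := by
    rw [coeff_Gs (Nat.lt_succ_self d), coeff_Gs (Nat.lt_succ_self d), ← Finset.sum_sub_distrib]
    have term : ∀ k, z ^ k * coeff d ((X:PowerSeries ℂ) ^ ((j + 1) * k) * (pc 1 k)⁻¹)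
        - z ^ k * coeff d ((X:PowerSeries ℂ) ^ ((j + 1 + 1) * k) * (pc 1 k)⁻¹)
        = z ^ k * coeff d (((X:PowerSeries ℂ) ^ ((j + 1) * k) * (pc 1 k)⁻¹)
            - ((X:PowerSeries ℂ) ^ ((j + 1 + 1) * k) * (pc 1 k)⁻¹)) := by
      intro k; rw [map_sub, mul_sub]
    simp only [term]
    have term2 : ∀ m : ℕ,
        ((X:PowerSeries ℂ) ^ ((j + 1) * (m+1)) * (pc 1 (m+1))⁻¹)
          - ((X:PowerSeries ℂ) ^ ((j + 1 + 1) * (m+1)) * (pc 1 (m+1))⁻¹)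
        = (X:PowerSeries ℂ) ^ (j+1) * ((X:PowerSeries ℂ) ^ ((j + 1) * m) * (pc 1 m)⁻¹) := by
      intro m
      have e1 : (j + 1 + 1) * (m+1) = (j+1)*(m+1) + (m+1) := by ring
      have e2 : (j + 1) * (m+1) = (j+1) + (j+1)*m := by ring
      rw [e1, pow_add, e2, pow_add]
      calc (X:PowerSeries ℂ) ^ (j+1) * X ^ ((j+1)*m) * (pc 1 (m+1))⁻¹
            - (X:PowerSeries ℂ) ^ (j+1) * X ^ ((j+1)*m) * X ^ (m+1) * (pc 1 (m+1))⁻¹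
          = (X:PowerSeries ℂ) ^ (j+1) * X ^ ((j+1)*m) *
              ((pc 1 (m+1))⁻¹ * (1 - X ^ (m+1))) := by ring
        _ = (X:PowerSeries ℂ) ^ (j+1) * (X ^ ((j+1)*m) * (pc 1 m)⁻¹) := by
            rw [inv_succ]; ring
    rw [Finset.sum_range_succ']
    have h0 : z ^ 0 * coeff d ((X:PowerSeries ℂ) ^ ((j + 1) * 0) * (pc 1 0)⁻¹
        - (X:PowerSeries ℂ) ^ ((j + 1 + 1) * 0) * (pc 1 0)⁻¹) = 0 := by
      simp
    rw [h0, add_zero]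
    by_cases hjd : j + 1 ≤ d
    · rw [if_pos hjd]
      have : ∀ m ∈ Finset.range d,
          z ^ (m+1) * coeff d ((X:PowerSeries ℂ) ^ ((j + 1) * (m+1)) * (pc 1 (m+1))⁻¹
            - (X:PowerSeries ℂ) ^ ((j + 1 + 1) * (m+1)) * (pc 1 (m+1))⁻¹)
          = z * (z ^ m * coeff (d - (j+1))
              ((X:PowerSeries ℂ) ^ ((j + 1) * m) * (pc 1 m)⁻¹)) := by
        intro m _
        rw [term2, PowerSeries.coeff_X_pow_mul', if_pos hjd, pow_succ]
        ring
      rw [Finset.sum_congr rfl this, ← Finset.mul_sum]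
      congr 1
      rw [coeff_Gs (show d - (j+1) < d by omega)]
    · rw [if_neg hjd, mul_zero]
      apply Finset.sum_eq_zero
      intro m _
      rw [term2, PowerSeries.coeff_X_pow_mul', if_neg hjd, mul_zero]
  linear_combination -key

/-- `∑ m (-1)^m z^m q^{m(m+1)/2 + jm}/(q;q)_m`. -/
noncomputable def Hs (z : ℂ) (j : ℕ) : PowerSeries ℂ :=
  PowerSeries.mk fun d => ∑ m ∈ Finset.range (d + 1),
    (-1 : ℂ) ^ m * z ^ m *
      coeff d ((X : PowerSeries ℂ) ^ (m * (m + 1) / 2 + j * m) * (pc 1 m)⁻¹)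

lemma coeff_Hs {z : ℂ} {j d n : ℕ} (hn : d < n) :
    coeff d (Hs z j) = ∑ m ∈ Finset.range n,
      (-1 : ℂ) ^ m * z ^ m *
        coeff d ((X : PowerSeries ℂ) ^ (m * (m + 1) / 2 + j * m) * (pc 1 m)⁻¹) := by
  rw [Hs, coeff_mk]
  apply Finset.sum_subset
  · intro x hx; rw [Finset.mem_range] at *; omega
  · intro x _ hx
    rw [Finset.mem_range] at hx
    have : ¬ (x * (x + 1) / 2 + j * x ≤ d) := by
      have := le_tri x; omega
    rw [PowerSeries.coeff_X_pow_mul', if_neg this, mul_zero]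

lemma Hs_rec (z : ℂ) (j : ℕ) :
    Hs z j = (1 - PowerSeries.C z * X ^ (j + 1)) * Hs z (j + 1) := by
  ext d
  have hR : coeff d ((1 - PowerSeries.C z * X ^ (j + 1)) * Hs z (j+1))
      = coeff d (Hs z (j+1))
        - z * (if j + 1 ≤ d then coeff (d - (j+1)) (Hs z (j+1)) else 0) := by
    rw [sub_mul, one_mul, map_sub, mul_assoc, PowerSeries.coeff_C_mul,
      PowerSeries.coeff_X_pow_mul']
  rw [hR]
  have key : coeff d (Hs z j) - coeff d (Hs z (j+1))
      = - (z * (if j + 1 ≤ d then coeff (d - (j+1)) (Hs z (j+1)) else 0)) := by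
    rw [coeff_Hs (Nat.lt_succ_self d), coeff_Hs (Nat.lt_succ_self d), ← Finset.sum_sub_distrib]
    have term : ∀ m, (-1:ℂ) ^ m * z ^ m *
          coeff d ((X:PowerSeries ℂ) ^ (m * (m+1)/2 + j * m) * (pc 1 m)⁻¹)
        - (-1:ℂ) ^ m * z ^ m *
          coeff d ((X:PowerSeries ℂ) ^ (m * (m+1)/2 + (j+1) * m) * (pc 1 m)⁻¹)
        = (-1:ℂ) ^ m * z ^ m * coeff d
            (((X:PowerSeries ℂ) ^ (m * (m+1)/2 + j * m) * (pc 1 m)⁻¹)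
              - ((X:PowerSeries ℂ) ^ (m * (m+1)/2 + (j+1) * m) * (pc 1 m)⁻¹)) := by
      intro m; rw [map_sub, mul_sub]
    simp only [term]
    have term2 : ∀ s : ℕ,
        ((X:PowerSeries ℂ) ^ ((s+1) * (s+1+1)/2 + j * (s+1)) * (pc 1 (s+1))⁻¹)
          - ((X:PowerSeries ℂ) ^ ((s+1) * (s+1+1)/2 + (j+1) * (s+1)) * (pc 1 (s+1))⁻¹)
        = (X:PowerSeries ℂ) ^ (j+1) *
            ((X:PowerSeries ℂ) ^ (s * (s+1)/2 + (j+1) * s) * (pc 1 s)⁻¹) := by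
      intro s
      have ha : (s+1) * (s+1+1)/2 + j * (s+1) = (j+1) + (s * (s+1)/2 + (j+1) * s) := by
        rw [tri_succ]; ring
      have hb : (s+1) * (s+1+1)/2 + (j+1) * (s+1)
          = ((j+1) + (s * (s+1)/2 + (j+1) * s)) + (s+1) := by
        rw [tri_succ]; ring
      have p1 : (X : PowerSeries ℂ) ^ ((j+1) + (s * (s+1)/2 + (j+1) * s))
          = X^(j+1) * X^(s * (s+1)/2 + (j+1) * s) := pow_add _ _ _
      have p2 : (X : PowerSeries ℂ) ^ (((j+1) + (s * (s+1)/2 + (j+1) * s)) + (s+1))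
          = X^(j+1) * X^(s * (s+1)/2 + (j+1) * s) * X^(s+1) := by
        rw [pow_add, p1]
      rw [ha, hb, p1, p2]
      calc (X:PowerSeries ℂ)^(j+1) * X^(s*(s+1)/2 + (j+1)*s) * (pc 1 (s+1))⁻¹
            - (X:PowerSeries ℂ)^(j+1) * X^(s*(s+1)/2 + (j+1)*s) * X^(s+1) * (pc 1 (s+1))⁻¹
          = (X:PowerSeries ℂ)^(j+1) * X^(s*(s+1)/2 + (j+1)*s) *
              ((pc 1 (s+1))⁻¹ * (1 - X^(s+1))) := by ring
        _ = (X:PowerSeries ℂ)^(j+1) * (X^(s*(s+1)/2 + (j+1)*s) * (pc 1 s)⁻¹) := by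
            rw [inv_succ]; ring
    rw [Finset.sum_range_succ']
    have h0 : (-1:ℂ) ^ 0 * z ^ 0 * coeff d
        ((X:PowerSeries ℂ) ^ (0 * (0+1)/2 + j * 0) * (pc 1 0)⁻¹
          - (X:PowerSeries ℂ) ^ (0 * (0+1)/2 + (j+1) * 0) * (pc 1 0)⁻¹) = 0 := by
      simp
    rw [h0, add_zero]
    by_cases hjd : j + 1 ≤ d
    · rw [if_pos hjd]
      have step : ∀ s ∈ Finset.range d,
          (-1:ℂ) ^ (s+1) * z ^ (s+1) * coeff d
            ((X:PowerSeries ℂ) ^ ((s+1) * (s+1+1)/2 + j * (s+1)) * (pc 1 (s+1))⁻¹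
              - (X:PowerSeries ℂ) ^ ((s+1) * (s+1+1)/2 + (j+1) * (s+1)) * (pc 1 (s+1))⁻¹)
          = -(z * ((-1:ℂ) ^ s * z ^ s * coeff (d - (j+1))
              ((X:PowerSeries ℂ) ^ (s * (s+1)/2 + (j+1) * s) * (pc 1 s)⁻¹))) := by
        intro s _
        rw [term2, PowerSeries.coeff_X_pow_mul', if_pos hjd, pow_succ, pow_succ]
        ring
      rw [Finset.sum_congr rfl step, coeff_Hs (show d - (j+1) < d by omega),
        Finset.mul_sum, ← Finset.sum_neg_distrib]
    · rw [if_neg hjd, mul_zero, neg_zero]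
      apply Finset.sum_eq_zero
      intro s _
      rw [term2, PowerSeries.coeff_X_pow_mul', if_neg hjd, mul_zero]
  linear_combination key

/-- `(z q ; q)_N` -/
noncomputable def Pz (z : ℂ) (N : ℕ) : PowerSeries ℂ :=
  ∏ i ∈ Finset.range N, (1 - PowerSeries.C z * X ^ (i + 1))

lemma Gs_prod (z : ℂ) (N : ℕ) : Gs z N = Pz z N * Gs z 0 := by
  induction N with
  | zero => simp [Pz]
  | succ n ih =>
    rw [Gs_rec, ih]
    conv_rhs => rw [Pz, Finset.prod_range_succ]
    rw [← Pz]
    ring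

lemma Hs_prod (z : ℂ) (N : ℕ) : Hs z 0 = Pz z N * Hs z N := by
  induction N with
  | zero => simp [Pz]
  | succ n ih =>
    rw [ih, Hs_rec z n]
    conv_rhs => rw [Pz, Finset.prod_range_succ]
    rw [← Pz]
    ring

lemma Gs_tail (z : ℂ) (N : ℕ) : (X : PowerSeries ℂ) ^ (N + 1) ∣ Gs z N - 1 := by
  rw [PowerSeries.X_pow_dvd_iff]
  intro e he
  rw [map_sub, Gs, coeff_mk, Finset.sum_range_succ']
  have h0 : z ^ 0 * coeff e ((X : PowerSeries ℂ) ^ ((N + 1) * 0) * (pc 1 0)⁻¹)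
      = coeff e (1 : PowerSeries ℂ) := by
    simp [inv_pc_zero]
  have hk : ∀ k ∈ Finset.range e,
      z ^ (k+1) * coeff e ((X : PowerSeries ℂ) ^ ((N + 1) * (k+1)) * (pc 1 (k+1))⁻¹) = 0 := by
    intro k _
    rw [PowerSeries.coeff_X_pow_mul', if_neg (by nlinarith), mul_zero]
  rw [Finset.sum_eq_zero hk, zero_add, h0, sub_self]

lemma Hs_tail (z : ℂ) (N : ℕ) : (X : PowerSeries ℂ) ^ (N + 1) ∣ Hs z N - 1 := by
  rw [PowerSeries.X_pow_dvd_iff]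
  intro e he
  rw [map_sub, Hs, coeff_mk, Finset.sum_range_succ']
  have h0 : (-1:ℂ) ^ 0 * z ^ 0 *
      coeff e ((X : PowerSeries ℂ) ^ (0 * (0+1)/2 + N * 0) * (pc 1 0)⁻¹)
      = coeff e (1 : PowerSeries ℂ) := by
    simp [inv_pc_zero]
  have hk : ∀ k ∈ Finset.range e,
      (-1:ℂ) ^ (k+1) * z ^ (k+1) *
        coeff e ((X : PowerSeries ℂ) ^ ((k+1) * (k+1+1)/2 + N * (k+1)) * (pc 1 (k+1))⁻¹)
        = 0 := by
    intro k _
    have hle := le_tri (k+1)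
    rw [PowerSeries.coeff_X_pow_mul', if_neg (by nlinarith), mul_zero]
  rw [Finset.sum_eq_zero hk, zero_add, h0, sub_self]

lemma cube_factor {R : Type*} [CommRing R] (w t : R) (hw : w^2 + w + 1 = 0) :
    (1 - t) * (1 - w * t) * (1 - w^2 * t) = 1 - t^3 := by
  linear_combination (-t + w*t^2 - (w-1)*t^3) * hw

lemma triple (w : ℂ) (hw : w^2 + w + 1 = 0) (N : ℕ) :
    pc 3 N = pc 1 N * Pz w N * Pz (w^2) N := by
  unfold pc Pz
  rw [← Finset.prod_mul_distrib, ← Finset.prod_mul_distrib]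
  apply Finset.prod_congr rfl
  intro i _
  have : (3 : ℕ) * (i+1) = (i+1) * 3 := by ring
  rw [this, pow_mul, one_mul, ← cube_factor (PowerSeries.C w) (X^(i+1)) (by
    have h := congrArg (PowerSeries.C) hw
    simpa using h)]
  rw [map_pow]

noncomputable def ww : ℂ := (-1 + Real.sqrt 3 * Complex.I) / 2

lemma hww : ww ^ 2 + ww + 1 = 0 := by
  have h3 : ((Real.sqrt 3 : ℝ) : ℂ) ^ 2 = 3 := by
    rw [← Complex.ofReal_pow, Real.sq_sqrt (by norm_num : (0:ℝ) ≤ 3)]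
    norm_num
  have hI : Complex.I ^ 2 = -1 := Complex.I_sq
  unfold ww
  linear_combination (Complex.I ^ 2 / 4) * h3 + (3 / 4 : ℂ) * hI

lemma ww_ne : ww - ww ^ 2 ≠ 0 := by
  have h : ww - ww ^ 2 = Real.sqrt 3 * Complex.I := by
    have h2 : ww ^ 2 = -1 - ww := by linear_combination hww
    rw [h2]
    unfold ww
    ring
  rw [h]
  simp only [mul_ne_zero_iff]
  constructor
  · norm_cast
    positivity
  · exact Complex.I_ne_zero

lemma ww3 : ww ^ 3 = 1 := by linear_combination (ww - 1) * hww

noncomputable def cc : ℂ := (ww - ww ^ 2)⁻¹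

lemma hcc : cc * (ww - ww ^ 2) = 1 := inv_mul_cancel₀ ww_ne

lemma chi_eq (n : ℕ) : ((chi (n : ℤ)) : ℂ) = cc * (ww ^ n - ww ^ (2 * n)) := by
  rw [pow_eq_pow_mod n ww3, pow_eq_pow_mod (2 * n) ww3]
  have h : n % 3 = 0 ∨ n % 3 = 1 ∨ n % 3 = 2 := by omega
  rcases h with h | h | h
  · have h2 : 2 * n % 3 = 0 := by omega
    have hc : (n : ℤ) % 3 = 0 := by omega
    rw [h, h2, chi, if_neg (by omega), if_neg (by omega)]
    simp
  · have h2 : 2 * n % 3 = 2 := by omega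
    have hc : (n : ℤ) % 3 = 1 := by omega
    rw [h, h2, chi, if_pos hc]
    push_cast
    linear_combination -hcc
  · have h2 : 2 * n % 3 = 1 := by omega
    have hc : (n : ℤ) % 3 = 2 := by omega
    rw [h, h2, chi, if_neg (by omega), if_pos hc]
    push_cast
    linear_combination hcc

lemma chi_eq2 (m b : ℕ) :
    ((chi ((m : ℤ) - b)) : ℂ) = -(cc * (ww ^ (2 * m + b) - ww ^ (m + 2 * b))) := by
  rw [pow_eq_pow_mod (2 * m + b) ww3, pow_eq_pow_mod (m + 2 * b) ww3]
  have h : ((m : ℤ) - b) % 3 = 0 ∨ ((m : ℤ) - b) % 3 = 1 ∨ ((m : ℤ) - b) % 3 = 2 := by omega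
  rcases h with h | h | h
  · have h1 : (2 * m + b) % 3 = (m + 2 * b) % 3 := by omega
    rw [h1, chi, if_neg (by omega), if_neg (by omega)]
    simp
  · have h1 : (2 * m + b) % 3 = 2 := by omega
    have h2 : (m + 2 * b) % 3 = 1 := by omega
    rw [h1, h2, chi, if_pos h]
    push_cast
    linear_combination -hcc
  · have h1 : (2 * m + b) % 3 = 1 := by omega
    have h2 : (m + 2 * b) % 3 = 2 := by omega
    rw [h1, h2, chi, if_neg (by omega), if_pos h]
    push_cast
    linear_combination hcc

noncomputable def Aser (b : ℕ) : PowerSeries ℂ :=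
  PowerSeries.mk fun d => ∑ k ∈ Finset.range (d + 1),
    ((chi ((k : ℤ) + b)) : ℂ) * coeff d ((X : PowerSeries ℂ) ^ k * (pc 1 k)⁻¹)

noncomputable def Bser (b : ℕ) : PowerSeries ℂ :=
  PowerSeries.mk fun d => ∑ m ∈ Finset.range (d + 1),
    ((-1 : ℂ) ^ (m + 1) * ((chi ((m : ℤ) - b)) : ℂ)) *
      coeff d ((X : PowerSeries ℂ) ^ (m * (m + 1) / 2) * (pc 1 m)⁻¹)

lemma Aser_eq (b : ℕ) :
    Aser b = PowerSeries.C cc * (PowerSeries.C (ww ^ b) * Gs ww 0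
      - PowerSeries.C (ww ^ (2 * b)) * Gs (ww ^ 2) 0) := by
  ext d
  rw [Aser, coeff_mk, PowerSeries.coeff_C_mul, map_sub, PowerSeries.coeff_C_mul,
    PowerSeries.coeff_C_mul, Gs, Gs, coeff_mk, coeff_mk, Finset.mul_sum, Finset.mul_sum,
    ← Finset.sum_sub_distrib, Finset.mul_sum]
  apply Finset.sum_congr rfl
  intro k _
  have hcast : (k : ℤ) + b = ((k + b : ℕ) : ℤ) := by push_cast; ring
  rw [hcast, chi_eq (k + b), show 2 * (k + b) = 2 * k + 2 * b by ring,
    pow_add, pow_add, pow_mul, show (0 + 1) * k = k by ring]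
  ring

lemma Bser_eq (b : ℕ) :
    Bser b = PowerSeries.C cc * (PowerSeries.C (ww ^ b) * Hs (ww ^ 2) 0
      - PowerSeries.C (ww ^ (2 * b)) * Hs ww 0) := by
  ext d
  rw [Bser, coeff_mk, PowerSeries.coeff_C_mul, map_sub, PowerSeries.coeff_C_mul,
    PowerSeries.coeff_C_mul, Hs, Hs, coeff_mk, coeff_mk, Finset.mul_sum, Finset.mul_sum,
    ← Finset.sum_sub_distrib, Finset.mul_sum]
  apply Finset.sum_congr rfl
  intro m _
  rw [chi_eq2 m b, pow_add, pow_add, pow_mul, show 0 * m = 0 by ring, add_zero]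
  ring

lemma main_coeff (b d : ℕ) :
    coeff d (pc 3 (d + 1) * Aser b) = coeff d (pc 1 (d + 1) * Bser b) := by
  set N := d + 1 with hN
  set I : Ideal (PowerSeries ℂ) := Ideal.span {(X : PowerSeries ℂ) ^ (N + 1)} with hI
  set π := Ideal.Quotient.mk I with hπdef
  have hπ : ∀ f g : PowerSeries ℂ, (X : PowerSeries ℂ) ^ (N + 1) ∣ f - g → π f = π g := by
    intro f g h
    exact Ideal.Quotient.eq.mpr (Ideal.mem_span_singleton.mpr h)
  have key : π (pc 3 N * Aser b) = π (pc 1 N * Bser b) := by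
    have hg1 : π (Gs ww N) = 1 := by
      have := hπ _ _ (Gs_tail ww N); rw [this, map_one]
    have hg2 : π (Gs (ww ^ 2) N) = 1 := by
      have := hπ _ _ (Gs_tail (ww ^ 2) N); rw [this, map_one]
    have hh1 : π (Hs ww N) = 1 := by
      have := hπ _ _ (Hs_tail ww N); rw [this, map_one]
    have hh2 : π (Hs (ww ^ 2) N) = 1 := by
      have := hπ _ _ (Hs_tail (ww ^ 2) N); rw [this, map_one]
    have HG1 : π (Pz ww N) * π (Gs ww 0) = 1 := by
      rw [← map_mul, ← Gs_prod, hg1]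
    have HG2 : π (Pz (ww ^ 2) N) * π (Gs (ww ^ 2) 0) = 1 := by
      rw [← map_mul, ← Gs_prod, hg2]
    have HH1 : π (Hs ww 0) = π (Pz ww N) := by
      rw [Hs_prod ww N, map_mul, hh1, mul_one]
    have HH2 : π (Hs (ww ^ 2) 0) = π (Pz (ww ^ 2) N) := by
      rw [Hs_prod (ww ^ 2) N, map_mul, hh2, mul_one]
    rw [Aser_eq, Bser_eq, triple ww hww N]
    simp only [map_mul, map_sub]
    rw [HH1, HH2]
    linear_combination (π (pc 1 N) * π (PowerSeries.C cc) * π (PowerSeries.C (ww ^ b))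
        * π (Pz (ww ^ 2) N)) * HG1
      - (π (pc 1 N) * π (PowerSeries.C cc) * π (PowerSeries.C (ww ^ (2 * b)))
        * π (Pz ww N)) * HG2
  have hdvd : (X : PowerSeries ℂ) ^ (N + 1) ∣ pc 3 N * Aser b - pc 1 N * Bser b :=
    Ideal.mem_span_singleton.mp (Ideal.Quotient.eq.mp key)
  exact coeff_eq_of_dvd hdvd (by omega)

noncomputable def phi : PowerSeries ℚ →+* PowerSeries ℂ :=
  PowerSeries.map (algebraMap ℚ ℂ)

lemma phi_pochP (M n : ℕ) : phi (pochP M n) = pc M n := by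
  unfold phi pochP pc
  rw [map_prod]
  apply Finset.prod_congr rfl
  intro i _
  rw [map_sub, map_one, map_pow, PowerSeries.map_X]

lemma constCoeff_pochP (M n : ℕ) (hM : 1 ≤ M) : constantCoeff (pochP M n) = 1 := by
  unfold pochP
  rw [map_prod]
  apply Finset.prod_eq_one
  intro i _
  have h : (constantCoeff) ((X : PowerSeries ℚ) ^ (M * (i + 1))) = 0 := by
    rw [map_pow, constantCoeff_X, zero_pow]
    positivity
  simp [h]

lemma pochP_mul_inv (n : ℕ) : pochP 1 n * (pochP 1 n)⁻¹ = 1 :=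
  PowerSeries.mul_inv_cancel _ (by rw [constCoeff_pochP 1 n le_rfl]; exact one_ne_zero)

lemma phi_inv (k : ℕ) : phi ((pochP 1 k)⁻¹) = (pc 1 k)⁻¹ := by
  apply mul_left_cancel₀ (pc_ne_zero 1 k le_rfl)
  rw [pc_mul_inv, ← phi_pochP, ← map_mul, pochP_mul_inv, map_one]

lemma phi_A (b : ℕ) :
    phi (PowerSeries.mk fun d => coeff d
        (∑ k ∈ range (d + 1),
          ((chi ((k : ℤ) + b) : ℚ)) • ((X : PowerSeries ℚ) ^ k * (pochP 1 k)⁻¹)))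
      = Aser b := by
  ext e
  rw [phi, PowerSeries.coeff_map, coeff_mk, Aser, coeff_mk, map_sum, map_sum]
  apply Finset.sum_congr rfl
  intro k _
  rw [PowerSeries.coeff_smul, smul_eq_mul, map_mul]
  have hc : (algebraMap ℚ ℂ) ((chi ((k : ℤ) + b) : ℚ)) = ((chi ((k : ℤ) + b)) : ℂ) :=
    map_intCast _ _
  have hco : (algebraMap ℚ ℂ) (coeff e ((X : PowerSeries ℚ) ^ k * (pochP 1 k)⁻¹))
      = coeff e ((X : PowerSeries ℂ) ^ k * (pc 1 k)⁻¹) := by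
    rw [← PowerSeries.coeff_map]
    have hm : PowerSeries.map (algebraMap ℚ ℂ) ((X : PowerSeries ℚ) ^ k * (pochP 1 k)⁻¹)
        = (X : PowerSeries ℂ) ^ k * (pc 1 k)⁻¹ := by
      rw [map_mul, map_pow, PowerSeries.map_X,
        show PowerSeries.map (algebraMap ℚ ℂ) ((pochP 1 k)⁻¹) = phi ((pochP 1 k)⁻¹) from rfl,
        phi_inv]
    rw [hm]
  rw [hc, hco]

lemma phi_B (b : ℕ) :
    phi (PowerSeries.mk fun d => coeff d
        (∑ m ∈ range (d + 1),
          ((-1 : ℚ) ^ (m + 1) * (chi ((m : ℤ) - b) : ℚ)) •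
            ((X : PowerSeries ℚ) ^ (m * (m + 1) / 2) * (pochP 1 m)⁻¹)))
      = Bser b := by
  ext e
  rw [phi, PowerSeries.coeff_map, coeff_mk, Bser, coeff_mk, map_sum, map_sum]
  apply Finset.sum_congr rfl
  intro m _
  rw [PowerSeries.coeff_smul, smul_eq_mul, map_mul]
  have hc : (algebraMap ℚ ℂ) ((-1 : ℚ) ^ (m + 1) * (chi ((m : ℤ) - b) : ℚ))
      = ((-1 : ℂ) ^ (m + 1) * ((chi ((m : ℤ) - b)) : ℂ)) := by
    rw [map_mul, map_pow, map_neg, map_one, map_intCast]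
  have hco : (algebraMap ℚ ℂ)
        (coeff e ((X : PowerSeries ℚ) ^ (m * (m + 1) / 2) * (pochP 1 m)⁻¹))
      = coeff e ((X : PowerSeries ℂ) ^ (m * (m + 1) / 2) * (pc 1 m)⁻¹) := by
    rw [← PowerSeries.coeff_map]
    have hm : PowerSeries.map (algebraMap ℚ ℂ)
          ((X : PowerSeries ℚ) ^ (m * (m + 1) / 2) * (pochP 1 m)⁻¹)
        = (X : PowerSeries ℂ) ^ (m * (m + 1) / 2) * (pc 1 m)⁻¹ := by
      rw [map_mul, map_pow, PowerSeries.map_X,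
        show PowerSeries.map (algebraMap ℚ ℂ) ((pochP 1 m)⁻¹) = phi ((pochP 1 m)⁻¹) from rfl,
        phi_inv]
    rw [hm]
  rw [hc, hco]

end S15

theorem stmt15 (b : ℕ) (hb : b ≤ 2) :
    (PowerSeries.mk fun d => coeff d
        (∑ k ∈ range (d + 1),
          ((chi ((k : ℤ) + b) : ℚ)) • ((X : PowerSeries ℚ) ^ k * (pochP 1 k)⁻¹)))
      = pochInf 1 * (pochInf 3)⁻¹ *
        (PowerSeries.mk fun d => coeff d
          (∑ m ∈ range (d + 1),
            ((-1 : ℚ) ^ (m + 1) * (chi ((m : ℤ) - b) : ℚ)) •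
              ((X : PowerSeries ℚ) ^ (m * (m + 1) / 2) * (pochP 1 m)⁻¹))) := by
  set A := (PowerSeries.mk fun d => coeff d
      (∑ k ∈ range (d + 1),
        ((chi ((k : ℤ) + b) : ℚ)) • ((X : PowerSeries ℚ) ^ k * (pochP 1 k)⁻¹))) with hA
  set B := (PowerSeries.mk fun d => coeff d
      (∑ m ∈ range (d + 1),
        ((-1 : ℚ) ^ (m + 1) * (chi ((m : ℤ) - b) : ℚ)) •
          ((X : PowerSeries ℚ) ^ (m * (m + 1) / 2) * (pochP 1 m)⁻¹))) with hB
  have hconst3 : constantCoeff (pochInf 3) ≠ 0 := by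
    rw [← PowerSeries.coeff_zero_eq_constantCoeff_apply, pochInf, coeff_mk,
      PowerSeries.coeff_zero_eq_constantCoeff_apply,
      S15.constCoeff_pochP 3 (0 + 1) (by norm_num)]
    exact one_ne_zero
  have hinv3 : pochInf 3 * (pochInf 3)⁻¹ = 1 := PowerSeries.mul_inv_cancel _ hconst3
  have hMain : pochInf 3 * A = pochInf 1 * B := by
    ext d
    have h3 : coeff d (pochInf 3 * A) = coeff d (pochP 3 (d + 1) * A) :=
      S15.coeff_mul_congr (fun i hi => by
        rw [pochInf, coeff_mk, S15.pochP_stable (by norm_num) (show i < d + 1 by omega)])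
    have h1 : coeff d (pochInf 1 * B) = coeff d (pochP 1 (d + 1) * B) :=
      S15.coeff_mul_congr (fun i hi => by
        rw [pochInf, coeff_mk, S15.pochP_stable (by norm_num) (show i < d + 1 by omega)])
    rw [h3, h1]
    apply (algebraMap ℚ ℂ).injective
    have e3 : S15.phi (pochP 3 (d + 1) * A) = S15.pc 3 (d + 1) * S15.Aser b := by
      rw [map_mul, S15.phi_pochP, hA, S15.phi_A]
    have e1 : S15.phi (pochP 1 (d + 1) * B) = S15.pc 1 (d + 1) * S15.Bser b := by
      rw [map_mul, S15.phi_pochP, hB, S15.phi_B]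
    rw [← PowerSeries.coeff_map, ← PowerSeries.coeff_map,
      show PowerSeries.map (algebraMap ℚ ℂ) = S15.phi from rfl, e3, e1]
    exact S15.main_coeff b d
  calc A = (pochInf 3)⁻¹ * (pochInf 3 * A) := by
        rw [← mul_assoc, mul_comm ((pochInf 3)⁻¹), hinv3, one_mul]
    _ = (pochInf 3)⁻¹ * (pochInf 1 * B) := by rw [hMain]
    _ = pochInf 1 * (pochInf 3)⁻¹ * B := by ring
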